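/- (Rudin–Forelli quasi-identity.) Let B(Ω) be an ℓ²-valued Bergman-type space. For all r, s ∈ ℝ, ∫_Ω |⟨K_z,K_w⟩_{B(Ω,ℂ)}|^{(r−s)/2} / ‖K_w‖^r_{B(Ω,ℂ)} dλ(w) ≃ ∫_Ω |⟨K_z,K_w⟩_{B(Ω,ℂ)}|^{(r+s)/2} / ( ‖K_z‖^s_{B(Ω,ℂ)} ‖K_w‖^r_{B(Ω,ℂ)} ) dλ(w), with implied constants independent of z ∈ Ω (they may depend on r and s). -/

import Mathlib

open MeasureTheory Filter Topology
open scoped NNReal ENNReal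

noncomputable section

/-- The sequence space `ℓ²`. -/
abbrev ℓ2 : Type := lp (fun _ : ℕ => ℂ) 2

/-- The standard orthonormal basis vectors of `ℓ²`. -/
abbrev eVec (k : ℕ) : ℓ2 := lp.single 2 k (1 : ℂ)

/-- A vector of `ℓ²` is *finite* if all but finitely many coordinates vanish. -/
def FinVec (e : ℓ2) : Prop := ∃ d : ℕ, ∀ k : ℕ, d ≤ k → (e : ∀ _ : ℕ, ℂ) k = 0

abbrev Cn (n : ℕ) := EuclideanSpace ℂ (Fin n)

instance {n : ℕ} : MeasurableSpace (Cn n) := borel _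
instance {n : ℕ} : BorelSpace (Cn n) := ⟨rfl⟩

/-- Auxiliary: `‖K_z‖_{B(Ω,ℂ)}`, the Bergman norm of the reproducing kernel. -/
def nKAux {n : ℕ} (σ : Measure (Cn n)) (K : Cn n → Cn n → ℂ) (z : Cn n) : ℝ :=
  Real.sqrt (∫ w, ‖K z w‖ ^ 2 ∂σ)

/-- Auxiliary: the `L²(σ)` inner product (conjugate-linear in the first slot). -/
def ipAux {n : ℕ} (σ : Measure (Cn n)) (f g : Cn n → ℂ) : ℂ :=
  ∫ w, (starRingEnd ℂ) (f w) * g w ∂σ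

/-- Auxiliary: the measure `dλ(z) = ‖K_z‖²_{B(Ω,ℂ)} dσ(z)`. -/
def lamAux {n : ℕ} (σ : Measure (Cn n)) (K : Cn n → Cn n → ℂ) : Measure (Cn n) :=
  σ.withDensity (fun w => ENNReal.ofReal (∫ u, ‖K w u‖ ^ 2 ∂σ))

/-- The projection `I^{(d)}` of `ℓ²` onto the span of the first `d` basis vectors. -/
def headProj (d : ℕ) (v : ℓ2) : ℓ2 :=
  ∑ k ∈ Finset.range d, lp.single 2 k ((v : ∀ _ : ℕ, ℂ) k)

/-- The complementary projection `I_{(d)} = I - I^{(d)}`. -/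
def tailProj (d : ℕ) (v : ℓ2) : ℓ2 := v - headProj d v

/-- Entrywise measurability of an operator-valued symbol. -/
def SymbMeasurable {n : ℕ} (F : Cn n → (ℓ2 →L[ℂ] ℓ2)) : Prop :=
  ∀ i k : ℕ, Measurable (fun z => ((F z (eVec k)) : ∀ _ : ℕ, ℂ) i)

/-- Boundedness of an operator-valued symbol. -/
def SymbBounded {n : ℕ} (F : Cn n → (ℓ2 →L[ℂ] ℓ2)) : Prop := ∃ C : ℝ, ∀ z, ‖F z‖ ≤ C

/-- `F` is `d`-finite: `F(z) = I^{(d)} F(z) I^{(d)}` for all `z`. -/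
def SymbDFinite {n : ℕ} (d : ℕ) (F : Cn n → (ℓ2 →L[ℂ] ℓ2)) : Prop :=
  ∀ z v, F z v = headProj d (F z (headProj d v))

/-- The symbol class `L^∞_fin`. -/
def SymbLinfFin {n : ℕ} (F : Cn n → (ℓ2 →L[ℂ] ℓ2)) : Prop :=
  SymbMeasurable F ∧ SymbBounded F ∧ ∃ d : ℕ, SymbDFinite d F

/-- An `ℓ²`-valued Bergman-type space, following Rahm,
"A Reproducing Kernel Thesis for Operators on ℓ²-valued Bergman-type Function Spaces".
The data: a domain `Ω ⊆ ℂⁿ`, involutive automorphisms `φ_z`, a quasi-invariant metric `d`,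
a finite Borel measure `σ`, and a reproducing kernel `K`, subject to axioms A.1–A.7. -/
structure VBergman (n : ℕ) where
  /-- The domain `Ω`. -/
  Ω : Set (Cn n)
  isOpen_Ω : IsOpen Ω
  isConnected_Ω : IsConnected Ω
  zero_mem : (0 : Cn n) ∈ Ω
  /-- A.1: the involutions `φ_z`. -/
  φ : Cn n → Cn n → Cn n
  φ_analytic : ∀ z ∈ Ω, AnalyticOnNhd ℂ (φ z) Ω
  φ_mapsTo : ∀ z ∈ Ω, Set.MapsTo (φ z) Ω Ω
  φ_involutive : ∀ z ∈ Ω, ∀ w ∈ Ω, φ z (φ z w) = w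
  φ_zero : ∀ z ∈ Ω, φ z 0 = z
  /-- A.2: the metric `𝔡` on `Ω`. -/
  d : Cn n → Cn n → ℝ
  d_nonneg : ∀ u ∈ Ω, ∀ v ∈ Ω, 0 ≤ d u v
  d_eq_zero_iff : ∀ u ∈ Ω, ∀ v ∈ Ω, (d u v = 0 ↔ u = v)
  d_symm : ∀ u ∈ Ω, ∀ v ∈ Ω, d u v = d v u
  d_triangle : ∀ u ∈ Ω, ∀ v ∈ Ω, ∀ w ∈ Ω, d u w ≤ d u v + d v w
  d_quasiInvariant : ∃ c C : ℝ, 0 < c ∧ ∀ z ∈ Ω, ∀ u ∈ Ω, ∀ v ∈ Ω,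
      c * d u v ≤ d (φ z u) (φ z v) ∧ d (φ z u) (φ z v) ≤ C * d u v
  d_separable : ∃ S : Set (Cn n), S.Countable ∧ S ⊆ Ω ∧
      ∀ x ∈ Ω, ∀ ε : ℝ, 0 < ε → ∃ y ∈ S, d x y < ε
  d_properBalls : ∀ z ∈ Ω, ∀ r : ℝ, IsCompact {w | w ∈ Ω ∧ d z w ≤ r}
  /-- A.3: the finite Borel measure `σ`. -/
  σ : Measure (Cn n)
  σ_finite : IsFiniteMeasure σ
  σ_carried : σ Ωᶜ = 0
  /-- A.3: the reproducing kernel `K_z` of `B(Ω,ℂ)`. -/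
  K : Cn n → Cn n → ℂ
  K_analytic : ∀ z ∈ Ω, AnalyticOnNhd ℂ (K z) Ω
  K_memLp : ∀ z ∈ Ω, MemLp (K z) 2 σ
  reproducing_sc : ∀ g : Cn n → ℂ, AnalyticOnNhd ℂ g Ω → MemLp g 2 σ →
      ∀ z ∈ Ω, g z = ∫ w, (starRingEnd ℂ) (K z w) * g w ∂σ
  reproducing_vec : ∀ f : Cn n → ℓ2,
      (∀ k : ℕ, AnalyticOnNhd ℂ (fun z => (f z : ∀ _ : ℕ, ℂ) k) Ω) → MemLp f 2 σ →
      ∀ z ∈ Ω, f z = ∫ w, (starRingEnd ℂ) (K z w) • f w ∂σ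
  nK_pos : ∀ z ∈ Ω, 0 < nKAux σ K z
  nK_continuous : ∀ z ∈ Ω, ∀ ε : ℝ, 0 < ε → ∃ δ : ℝ, 0 < δ ∧
      ∀ w ∈ Ω, d z w < δ → |nKAux σ K w - nKAux σ K z| < ε
  /-- A.4: quasi-invariance of `λ` under the `φ_z`. -/
  lam_quasiInvariant : ∃ c C : ℝ≥0, 0 < c ∧ ∀ z ∈ Ω, ∀ E : Set (Cn n),
      MeasurableSet E → E ⊆ Ω →
      (c : ℝ≥0∞) * lamAux σ K E ≤ lamAux σ K (φ z '' E) ∧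
      lamAux σ K (φ z '' E) ≤ (C : ℝ≥0∞) * lamAux σ K E
  /-- A.4: `λ` is doubling. -/
  lam_doubling : ∃ C : ℝ≥0, 1 < C ∧ ∀ z ∈ Ω, ∀ r : ℝ, 0 < r →
      lamAux σ K {w | w ∈ Ω ∧ d z w < 2 * r} ≤
        (C : ℝ≥0∞) * lamAux σ K {w | w ∈ Ω ∧ d z w < r}
  /-- A.5: `|⟨k_z,k_w⟩| ≃ 1/‖K_{φ_z(w)}‖`. -/
  A5 : ∃ c C : ℝ, 0 < c ∧ ∀ z ∈ Ω, ∀ w ∈ Ω,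
      c / nKAux σ K (φ z w) ≤ ‖ipAux σ (K z) (K w)‖ / (nKAux σ K z * nKAux σ K w) ∧
      ‖ipAux σ (K z) (K w)‖ / (nKAux σ K z * nKAux σ K w) ≤ C / nKAux σ K (φ z w)
  /-- A.6: the Rudin–Forelli exponent `κ`. -/
  κ : ℝ
  κ_nonneg : 0 ≤ κ
  κ_lt_two : κ < 2
  RF_pos : 0 < κ → ∀ r s : ℝ, κ < r → 0 < s → s < κ → ∃ C : ℝ, ∀ z ∈ Ω,
      ∫ w, ‖ipAux σ (K z) (K w)‖ ^ ((r + s) / 2) /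
        (nKAux σ K z ^ s * nKAux σ K w ^ r) ∂(lamAux σ K) ≤ C
  RF_zero : κ = 0 → ∀ r : ℝ, 0 < r → ∃ C : ℝ, ∀ z ∈ Ω,
      ∫ w, ‖ipAux σ (K z) (K w)‖ ^ r /
        (nKAux σ K z ^ r * nKAux σ K w ^ r) ∂(lamAux σ K) ≤ C
  /-- A.7: `‖K_z‖ → ∞` as `𝔡(z,0) → ∞`. -/
  K_blowup : ∀ M : ℝ, ∃ R : ℝ, ∀ z ∈ Ω, R ≤ d z 0 → M ≤ nKAux σ K z

namespace VBergman

variable {n : ℕ} (B : VBergman n)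

/-- `‖K_z‖_{B(Ω,ℂ)}`. -/
def nK (z : Cn n) : ℝ := nKAux B.σ B.K z

/-- The normalized reproducing kernel `k_z`. -/
def kf (z : Cn n) : Cn n → ℂ := fun w => B.K z w / (B.nK z : ℂ)

/-- The `L²(σ)` norm of a scalar-valued function. -/
def nrmSc (g : Cn n → ℂ) : ℝ := Real.sqrt (∫ w, ‖g w‖ ^ 2 ∂B.σ)

/-- The `L²(σ;ℓ²)` norm of an `ℓ²`-valued function. -/
def nrmV (f : Cn n → ℓ2) : ℝ := Real.sqrt (∫ w, ‖f w‖ ^ 2 ∂B.σ)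

/-- The `L²(σ)` inner product of scalar functions (conjugate-linear in the first slot). -/
def ipSc (f g : Cn n → ℂ) : ℂ := ipAux B.σ f g

/-- The `L²(σ;ℓ²)` inner product (conjugate-linear in the first slot). -/
def ipV (f g : Cn n → ℓ2) : ℂ := ∫ w, (inner ℂ (f w) (g w) : ℂ) ∂B.σ

/-- Membership in the scalar Bergman-type space `B(Ω,ℂ)`. -/
def MemBsc (g : Cn n → ℂ) : Prop := AnalyticOnNhd ℂ g B.Ω ∧ MemLp g 2 B.σ

/-- Membership in the `ℓ²`-valued Bergman-type space `B(Ω)`. -/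
def MemB (f : Cn n → ℓ2) : Prop :=
  (∀ k : ℕ, AnalyticOnNhd ℂ (fun z => (f z : ∀ _ : ℕ, ℂ) k) B.Ω) ∧ MemLp f 2 B.σ

/-- The function `w ↦ k_z(w) e` for a vector `e ∈ ℓ²`. -/
def kvec (z : Cn n) (e : ℓ2) : Cn n → ℓ2 := fun w => B.kf z w • e

/-- The translation operator `U_z` on `ℓ²`-valued functions. -/
def U (z : Cn n) (f : Cn n → ℓ2) : Cn n → ℓ2 := fun w => B.kf z w • f (B.φ z w)

/-- The translation operator `U_z` on scalar functions. -/
def Usc (z : Cn n) (g : Cn n → ℂ) : Cn n → ℂ := fun w => B.kf z w * g (B.φ z w)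

/-- The Bergman projection on `ℓ²`-valued functions. -/
def Pop (f : Cn n → ℓ2) : Cn n → ℓ2 := fun z => ∫ w, (starRingEnd ℂ) (B.K z w) • f w ∂B.σ

/-- The Bergman projection on scalar functions. -/
def PopSc (g : Cn n → ℂ) : Cn n → ℂ := fun z => ∫ w, (starRingEnd ℂ) (B.K z w) * g w ∂B.σ

/-- The Toeplitz operator with operator-valued symbol `F`. -/
def Top (F : Cn n → (ℓ2 →L[ℂ] ℓ2)) (f : Cn n → ℓ2) : Cn n → ℓ2 :=
  B.Pop (fun w => F w (f w))

/-- The Toeplitz operator with scalar symbol `v` acting on scalar functions. -/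
def TopSc (v : Cn n → ℂ) (g : Cn n → ℂ) : Cn n → ℂ := B.PopSc (fun w => v w * g w)

/-- The set of functions `k_z e` with `z ∈ Ω` and `e ∈ ℓ²` a finite vector. -/
def kerSpanSet : Set (Cn n → ℓ2) :=
  {f | ∃ z ∈ B.Ω, ∃ e : ℓ2, FinVec e ∧ f = B.kvec z e}

/-- The linear span of the normalized reproducing kernels `k_z e` (with `e` finite). -/
def kerSpan : Submodule ℂ (Cn n → ℓ2) := Submodule.span ℂ B.kerSpanSet

/-- `T` is linear on `B(Ω)`. -/
def IsLinOn (T : (Cn n → ℓ2) → (Cn n → ℓ2)) : Prop :=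
  (∀ f g, B.MemB f → B.MemB g → T (f + g) = T f + T g) ∧
  (∀ (c : ℂ) (f), B.MemB f → T (c • f) = c • T f)

/-- `T` maps `B(Ω)` into `B(Ω)`. -/
def MapsB (T : (Cn n → ℓ2) → (Cn n → ℓ2)) : Prop := ∀ f, B.MemB f → B.MemB (T f)

/-- The operator norm of `T` on `B(Ω)`. -/
def opNorm (T : (Cn n → ℓ2) → (Cn n → ℓ2)) : ℝ :=
  sInf {C : ℝ | 0 ≤ C ∧ ∀ f, B.MemB f → B.nrmV (T f) ≤ C * B.nrmV f}

/-- `T` is a compact operator on `B(Ω)`: bounded sequences in `B(Ω)` have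
subsequences whose images converge in norm. -/
def IsCompactOp (T : (Cn n → ℓ2) → (Cn n → ℓ2)) : Prop :=
  ∀ f : ℕ → (Cn n → ℓ2), (∀ m, B.MemB (f m)) → (∀ m, B.nrmV (f m) ≤ 1) →
    ∃ (g : Cn n → ℓ2) (ψ : ℕ → ℕ), StrictMono ψ ∧
      Tendsto (fun m => B.nrmV (T (f (ψ m)) - g)) atTop (nhds 0)

/-- The essential norm of `T` on `B(Ω)`. -/
def essNorm (T : (Cn n → ℓ2) → (Cn n → ℓ2)) : ℝ :=
  sInf {x : ℝ | ∃ A, B.IsLinOn A ∧ B.MapsB A ∧ B.IsCompactOp A ∧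
    x = B.opNorm (fun f => T f - A f)}

/-- `S` is an adjoint of `T` on `B(Ω)`. -/
def IsAdjointPair (T S : (Cn n → ℓ2) → (Cn n → ℓ2)) : Prop :=
  ∀ f g, B.MemB f → B.MemB g → B.ipV (T f) g = B.ipV f (S g)

/-- The filter of neighborhoods of the boundary: `𝔡(z,0) → ∞` within `Ω`. -/
def farFilter : Filter (Cn n) := ⨅ R : ℝ, Filter.principal {z | z ∈ B.Ω ∧ R ≤ B.d z 0}

/-- Entries of the Berezin transform:
`⟨T̃(z)e_k, e_i⟩ = ⟨T(k_z e_k), k_z e_i⟩_{B(Ω)}`. -/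
def berezin (T : (Cn n → ℓ2) → (Cn n → ℓ2)) (z : Cn n) (k i : ℕ) : ℂ :=
  B.ipV (B.kvec z (eVec i)) (T (B.kvec z (eVec k)))

/-- The symbol class `BUCO`: finite, bounded, uniformly continuous symbols. -/
def SymbBUCO (F : Cn n → (ℓ2 →L[ℂ] ℓ2)) : Prop :=
  SymbMeasurable F ∧ SymbBounded F ∧ (∃ d : ℕ, SymbDFinite d F) ∧
  ∀ ε : ℝ, 0 < ε → ∃ δ : ℝ, 0 < δ ∧
    ∀ z ∈ B.Ω, ∀ w ∈ B.Ω, B.d z w < δ → ‖F z - F w‖ < ε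

/-- Scalar symbols which are bounded and uniformly continuous on `(Ω,𝔡)`. -/
def SymbBUC (v : Cn n → ℂ) : Prop :=
  Measurable v ∧ (∃ C : ℝ, ∀ z, ‖v z‖ ≤ C) ∧
  ∀ ε : ℝ, 0 < ε → ∃ δ : ℝ, 0 < δ ∧
    ∀ z ∈ B.Ω, ∀ w ∈ B.Ω, B.d z w < δ → ‖v z - v w‖ < ε

/-- A finite product of Toeplitz operators given by a list of symbols. -/
def ToeProd (us : List (Cn n → (ℓ2 →L[ℂ] ℓ2))) : (Cn n → ℓ2) → (Cn n → ℓ2) :=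
  us.foldr (fun u S => fun f => B.Top u (S f)) id

/-- Membership in the (operator-norm closed) Toeplitz algebra generated by the
Toeplitz operators whose symbols satisfy `Symb`. -/
def InToeAlg (Symb : (Cn n → (ℓ2 →L[ℂ] ℓ2)) → Prop)
    (T : (Cn n → ℓ2) → (Cn n → ℓ2)) : Prop :=
  ∀ ε : ℝ, 0 < ε → ∃ (L : ℕ) (us : Fin L → List (Cn n → (ℓ2 →L[ℂ] ℓ2))),
    (∀ l : Fin L, ∀ u ∈ us l, Symb u) ∧
    ∀ f, B.MemB f → B.nrmV (fun z => T f z - ∑ l : Fin L, B.ToeProd (us l) f z) ≤ ε * B.nrmV f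

/-- A finite product of scalar Toeplitz operators. -/
def ToeProdSc (vs : List (Cn n → ℂ)) : (Cn n → ℂ) → (Cn n → ℂ) :=
  vs.foldr (fun v S => fun g => B.TopSc v (S g)) id

/-- Membership in the scalar Toeplitz algebra generated by symbols satisfying `Symb`. -/
def InToeAlgSc (Symb : (Cn n → ℂ) → Prop) (T : (Cn n → ℂ) → (Cn n → ℂ)) : Prop :=
  ∀ ε : ℝ, 0 < ε → ∃ (L : ℕ) (vs : Fin L → List (Cn n → ℂ)),
    (∀ l : Fin L, ∀ v ∈ vs l, Symb v) ∧
    ∀ g, B.MemBsc g → B.nrmSc (fun z => T g z - ∑ l : Fin L, B.ToeProdSc (vs l) g z) ≤ ε * B.nrmSc g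

/-- A positive measure `ν` is Carleson with respect to `σ`. -/
def Carleson (ν : Measure (Cn n)) : Prop :=
  ∃ C : ℝ, ∀ g, B.MemBsc g → ∫ w, ‖g w‖ ^ 2 ∂ν ≤ C * ∫ w, ‖g w‖ ^ 2 ∂B.σ

/-- Assumption A.8: for every scalar measure `dμ = h dν` whose total variation `ν`
is Carleson with respect to `σ`, the Toeplitz operator `T_μ` lies in the scalar
Toeplitz algebra generated by bounded, uniformly continuous symbols. -/
def A8 : Prop :=
  ∀ (ν : Measure (Cn n)) (h : Cn n → ℂ), Measurable h → (∀ w, ‖h w‖ ≤ 1) →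
    B.Carleson ν →
    B.InToeAlgSc B.SymbBUC (fun g z => ∫ w, (starRingEnd ℂ) (B.K z w) * (h w * g w) ∂ν)

/-- The space is *strong* if the quasi-equalities in A.2, A.4, A.5 hold with equality. -/
def IsStrong : Prop :=
  (∀ z ∈ B.Ω, ∀ u ∈ B.Ω, ∀ v ∈ B.Ω, B.d (B.φ z u) (B.φ z v) = B.d u v) ∧
  (∀ z ∈ B.Ω, ∀ E : Set (Cn n), MeasurableSet E → E ⊆ B.Ω →
    lamAux B.σ B.K (B.φ z '' E) = lamAux B.σ B.K E) ∧
  (∀ z ∈ B.Ω, ∀ w ∈ B.Ω,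
    ‖B.ipSc (B.kf z) (B.kf w)‖ = 1 / B.nK (B.φ z w))

end VBergman

/-!
Substituting `w ↦ φ_z w` changes `λ` at most by constant factors (A.4), and since `φ_z` is an
involution the substitution can be undone, so `∫ H ∘ φ_z dλ ≃ ∫ H dλ` for every `H ≥ 0`.
By A.5, `|⟨K_z, K_w⟩| ≃ ‖K_z‖ ‖K_w‖ / ‖K_{φ_z w}‖`; using this at `w` and at `φ_z w` shows that
the first integrand at `w` is comparable to the second integrand at `φ_z w`.
-/

theorem ENNReal.toReal_le_toReal_mul_of_le_mul {x y a b : ℝ≥0∞} (ha : a ≠ ∞) (hb : b ≠ ∞)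
    (hxy : x ≤ a * y) (hyx : y ≤ b * x) : x.toReal ≤ a.toReal * y.toReal := by
  by_cases hy : y = ∞
  · have hx : x = ∞ := by
      by_contra hx
      exact ENNReal.mul_ne_top hb hx (top_le_iff.mp (hy ▸ hyx))
    simp [hx, hy]
  · rw [← ENNReal.toReal_mul]
    exact ENNReal.toReal_mono (ENNReal.mul_ne_top ha hy) hxy

section ChangeOfVariables

variable {α : Type*} [MeasurableSpace α] {μ : Measure α} {φ : α → α} {c : ℝ≥0}

theorem smul_le_map_of_le_measure_image {s : Set α} (hs : MeasurableSet s) (hμs : μ sᶜ = 0)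
    (hφ : AEMeasurable φ μ) (hmaps : Set.MapsTo φ s s) (hinv : ∀ x ∈ s, φ (φ x) = x)
    (hc : ∀ E, MeasurableSet E → E ⊆ s → c * μ E ≤ μ (φ '' E)) :
    c • μ ≤ μ.map φ := by
  refine Measure.le_intro fun E hE _ => ?_
  have himage : φ ⁻¹' E ∩ s = φ '' (E ∩ s) := by
    ext x
    constructor
    · rintro ⟨hxE, hxs⟩
      exact ⟨φ x, ⟨hxE, hmaps hxs⟩, hinv x hxs⟩
    · rintro ⟨y, ⟨hyE, hys⟩, rfl⟩
      exact ⟨by simpa only [Set.mem_preimage, hinv y hys] using hyE, hmaps hys⟩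
  rw [Measure.smul_apply, ENNReal.smul_def, smul_eq_mul, Measure.map_apply_of_aemeasurable hφ hE,
    ← measure_inter_conull hμs, ← measure_inter_conull (s := φ ⁻¹' E) hμs, himage]
  exact hc _ (hE.inter hs) Set.inter_subset_right

theorem lintegral_le_inv_mul_lintegral_comp (hc0 : c ≠ 0) (hc : c • μ ≤ μ.map φ)
    (H : α → ℝ≥0∞) : ∫⁻ x, H x ∂μ ≤ (c : ℝ≥0∞)⁻¹ * ∫⁻ x, H (φ x) ∂μ := by
  rw [← ENNReal.mul_le_iff_le_inv (by exact_mod_cast hc0) ENNReal.coe_ne_top]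
  calc (c : ℝ≥0∞) * ∫⁻ x, H x ∂μ = ∫⁻ x, H x ∂(c • μ) := (lintegral_smul_measure c H).symm
    _ ≤ ∫⁻ x, H x ∂(μ.map φ) := lintegral_mono' hc le_rfl
    _ ≤ ∫⁻ x, H (φ x) ∂μ := lintegral_map_le H φ

/-- For an involution the reverse inequality comes for free: apply the previous one to `H ∘ φ`. -/
theorem lintegral_comp_le_inv_mul_lintegral (hc0 : c ≠ 0) (hc : c • μ ≤ μ.map φ)
    (hinv : ∀ᵐ x ∂μ, φ (φ x) = x) (H : α → ℝ≥0∞) :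
    ∫⁻ x, H (φ x) ∂μ ≤ (c : ℝ≥0∞)⁻¹ * ∫⁻ x, H x ∂μ := by
  calc ∫⁻ x, H (φ x) ∂μ ≤ (c : ℝ≥0∞)⁻¹ * ∫⁻ x, H (φ (φ x)) ∂μ :=
        lintegral_le_inv_mul_lintegral_comp hc0 hc (H ∘ φ)
    _ = (c : ℝ≥0∞)⁻¹ * ∫⁻ x, H x ∂μ := by
        rw [lintegral_congr_ae (hinv.mono fun x hx => by rw [hx])]

/-- The comparison goes through the lower integrals; bounds in both directions are needed because
a non-integrable side has Bochner integral `0`. -/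
theorem integral_comparable_of_le_comp (hc0 : c ≠ 0) (hc : c • μ ≤ μ.map φ) (hinv : ∀ᵐ x ∂μ, φ (φ x) = x)
    {f g : α → ℝ} (hf : 0 ≤ f) (hg : 0 ≤ g) (hfm : AEStronglyMeasurable f μ)
    (hgm : AEStronglyMeasurable g μ) {a b : ℝ} (ha : 0 < a) (hb : 0 ≤ b)
    (hfg : ∀ᵐ x ∂μ, f x ≤ a * g (φ x)) (hgf : ∀ᵐ x ∂μ, g (φ x) ≤ b * f x) :
    c / a * ∫ x, f x ∂μ ≤ ∫ x, g x ∂μ ∧ ∫ x, g x ∂μ ≤ b / c * ∫ x, f x ∂μ := by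
  set F := ∫⁻ x, ENNReal.ofReal (f x) ∂μ
  set G := ∫⁻ x, ENNReal.ofReal (g x) ∂μ
  have hFG : F ≤ ENNReal.ofReal a * (c : ℝ≥0∞)⁻¹ * G := calc
    F ≤ ∫⁻ x, ENNReal.ofReal a * ENNReal.ofReal (g (φ x)) ∂μ := lintegral_mono_ae <|
        hfg.mono fun x hx => (ENNReal.ofReal_le_ofReal hx).trans_eq (ENNReal.ofReal_mul ha.le)
    _ = ENNReal.ofReal a * ∫⁻ x, ENNReal.ofReal (g (φ x)) ∂μ :=
        lintegral_const_mul' _ _ ENNReal.ofReal_ne_top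
    _ ≤ ENNReal.ofReal a * ((c : ℝ≥0∞)⁻¹ * G) :=
        mul_le_mul_right (lintegral_comp_le_inv_mul_lintegral hc0 hc hinv _) _
    _ = ENNReal.ofReal a * (c : ℝ≥0∞)⁻¹ * G := (mul_assoc _ _ _).symm
  have hGF : G ≤ (c : ℝ≥0∞)⁻¹ * ENNReal.ofReal b * F := calc
    G ≤ (c : ℝ≥0∞)⁻¹ * ∫⁻ x, ENNReal.ofReal (g (φ x)) ∂μ :=
        lintegral_le_inv_mul_lintegral_comp hc0 hc _
    _ ≤ (c : ℝ≥0∞)⁻¹ * ∫⁻ x, ENNReal.ofReal b * ENNReal.ofReal (f x) ∂μ :=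
        mul_le_mul_right (lintegral_mono_ae <| hgf.mono fun x hx =>
          (ENNReal.ofReal_le_ofReal hx).trans_eq (ENNReal.ofReal_mul hb)) _
    _ = (c : ℝ≥0∞)⁻¹ * ENNReal.ofReal b * F := by
        rw [lintegral_const_mul' _ _ ENNReal.ofReal_ne_top, mul_assoc]
  have hinvc : (c : ℝ≥0∞)⁻¹ ≠ ∞ := ENNReal.inv_ne_top.mpr (by exact_mod_cast hc0)
  have hfF : ∫ x, f x ∂μ = F.toReal :=
    integral_eq_lintegral_of_nonneg_ae (.of_forall hf) hfm
  have hgG : ∫ x, g x ∂μ = G.toReal :=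
    integral_eq_lintegral_of_nonneg_ae (.of_forall hg) hgm
  have hf_le := ENNReal.toReal_le_toReal_mul_of_le_mul
    (ENNReal.mul_ne_top ENNReal.ofReal_ne_top hinvc)
    (ENNReal.mul_ne_top hinvc ENNReal.ofReal_ne_top) hFG hGF
  have hg_le := ENNReal.toReal_le_toReal_mul_of_le_mul
    (ENNReal.mul_ne_top hinvc ENNReal.ofReal_ne_top)
    (ENNReal.mul_ne_top ENNReal.ofReal_ne_top hinvc) hGF hFG
  simp only [ENNReal.toReal_mul, ENNReal.toReal_inv, ENNReal.coe_toReal,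
    ENNReal.toReal_ofReal ha.le, ENNReal.toReal_ofReal hb] at hf_le hg_le
  have hc_pos : (0 : ℝ) < c := by exact_mod_cast pos_iff_ne_zero.mpr hc0
  rw [hfF, hgG]
  constructor
  · rw [div_mul_eq_mul_div, div_le_iff₀ ha]
    calc (c : ℝ) * F.toReal ≤ c * (a * (c : ℝ)⁻¹ * G.toReal) := by gcongr
      _ = G.toReal * a := by field_simp
  · calc G.toReal ≤ (c : ℝ)⁻¹ * b * F.toReal := hg_le
      _ = b / c * F.toReal := by ring

end ChangeOfVariables

theorem Real.rpow_le_add_rpow_of_mem_Icc {c C ρ : ℝ} (hc : 0 < c) (hρ : ρ ∈ Set.Icc c C)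
    (e : ℝ) : ρ ^ e ≤ c ^ e + C ^ e := by
  have hρ0 : 0 < ρ := hc.trans_le hρ.1
  rcases le_total 0 e with he | he
  · calc ρ ^ e ≤ C ^ e := Real.rpow_le_rpow hρ0.le hρ.2 he
      _ ≤ c ^ e + C ^ e := le_add_of_nonneg_left (Real.rpow_nonneg hc.le e)
  · calc ρ ^ e ≤ c ^ e := Real.rpow_le_rpow_of_nonpos hc hρ.1 he
      _ ≤ c ^ e + C ^ e :=
          le_add_of_nonneg_right (Real.rpow_nonneg (hc.le.trans (hρ.1.trans hρ.2)) e)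

theorem Real.le_mul_of_mul_rpow_eq {X Y ρ ρ' c C e e' : ℝ} (hc : 0 < c)
    (hρ : ρ ∈ Set.Icc c C) (hρ' : ρ' ∈ Set.Icc c C) (hY : 0 ≤ Y)
    (h : X * ρ' ^ e' = Y * ρ ^ e) : X ≤ (c ^ e + C ^ e) * (c ^ (-e') + C ^ (-e')) * Y := by
  have hρ'0 : 0 < ρ' := hc.trans_le hρ'.1
  have hX : X = Y * (ρ ^ e * ρ' ^ (-e')) := by
    rw [Real.rpow_neg hρ'0.le, ← mul_assoc, ← h]
    field_simp [(Real.rpow_pos_of_pos hρ'0 e').ne']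
  rw [hX, mul_comm Y]
  have := (hc.trans_le hρ.1).le
  have := (hc.trans_le (hρ.1.trans hρ.2)).le
  gcongr
  · exact Real.rpow_le_add_rpow_of_mem_Icc hc hρ e
  · exact Real.rpow_le_add_rpow_of_mem_Icc hc hρ' (-e')

/-- With `ρ = t p / (a b)`, `ρ' = t' b / (a p)` and `X = a^{(r-s)/2} b^{-(r+s)/2} p^{-(r-s)/2}`,
the two integrands are `ρ^{(r-s)/2} X` and `ρ'^{(r+s)/2} X`. -/
theorem Real.rudinForelli_rpow_identity {a b p t t' : ℝ} (ha : 0 < a) (hb : 0 < b) (hp : 0 < p)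
    (ht : 0 ≤ t) (ht' : 0 ≤ t') (r s : ℝ) :
    t ^ ((r - s) / 2) / b ^ r * (t' / (a * p) * b) ^ ((r + s) / 2) =
      t' ^ ((r + s) / 2) / (a ^ s * p ^ r) * (t / (a * b) * p) ^ ((r - s) / 2) := by
  obtain ⟨e₁, he₁⟩ : ∃ e, e = (r - s) / 2 := ⟨_, rfl⟩
  obtain ⟨e₂, he₂⟩ : ∃ e, e = (r + s) / 2 := ⟨_, rfl⟩
  have hr : r = e₁ + e₂ := by rw [he₁, he₂]; ring
  have hs : s = e₂ - e₁ := by rw [he₁, he₂]; ring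
  rw [← he₁, ← he₂, hr, hs, Real.rpow_add hb, Real.rpow_add hp, Real.rpow_sub ha,
    Real.mul_rpow (div_nonneg ht' (by positivity)) hb.le, Real.div_rpow ht' (by positivity),
    Real.mul_rpow (div_nonneg ht (by positivity)) hp.le, Real.div_rpow ht (by positivity),
    Real.mul_rpow ha.le hp.le, Real.mul_rpow ha.le hb.le]
  have := Real.rpow_pos_of_pos ha e₁
  have := Real.rpow_pos_of_pos ha e₂
  have := Real.rpow_pos_of_pos hb e₁
  have := Real.rpow_pos_of_pos hb e₂
  have := Real.rpow_pos_of_pos hp e₁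
  have := Real.rpow_pos_of_pos hp e₂
  field_simp

theorem conj_ipAux {n : ℕ} (σ : Measure (Cn n)) (f g : Cn n → ℂ) :
    starRingEnd ℂ (ipAux σ f g) = ipAux σ g f := by
  unfold ipAux
  rw [← integral_conj]
  congr 1
  funext w
  rw [map_mul, Complex.conj_conj, mul_comm]

namespace VBergman

variable {n : ℕ} (B : VBergman n)

theorem ae_mem_Ω : ∀ᵐ w ∂(lamAux B.σ B.K), w ∈ B.Ω :=
  mem_ae_iff.mpr (withDensity_absolutelyContinuous B.σ _ B.σ_carried)

theorem aemeasurable_of_continuousOn {β : Type*} [TopologicalSpace β] [MeasurableSpace β]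
    [BorelSpace β] {f : Cn n → β} (hf : ContinuousOn f B.Ω) :
    AEMeasurable f (lamAux B.σ B.K) := by
  simpa only [Measure.restrict_eq_self_of_ae_mem B.ae_mem_Ω] using
    hf.aemeasurable (μ := lamAux B.σ B.K) B.isOpen_Ω.measurableSet

theorem measurableSet_dBall {y : Cn n} (hy : y ∈ B.Ω) (q : ℝ) :
    MeasurableSet {w | w ∈ B.Ω ∧ B.d y w < q} := by
  have hunion : {w | w ∈ B.Ω ∧ B.d y w < q} =
      ⋃ m : ℕ, {w | w ∈ B.Ω ∧ B.d y w ≤ q - 1 / (m + 1)} := by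
    ext w
    simp only [Set.mem_ofPred_eq, Set.mem_iUnion]
    constructor
    · rintro ⟨hw, hd⟩
      obtain ⟨m, hm⟩ := exists_nat_one_div_lt (sub_pos.mpr hd)
      exact ⟨m, hw, by linarith⟩
    · rintro ⟨m, hw, hd⟩
      exact ⟨hw, hd.trans_lt (sub_lt_self q Nat.one_div_pos_of_nat)⟩
  rw [hunion]
  exact MeasurableSet.iUnion fun m => (B.d_properBalls y hy _).measurableSet

/-- Subsets of `Ω` that are open for `𝔡` are Borel: by separability they are countable unions of
open `𝔡`-balls, and these are unions of the compact closed balls. -/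
theorem measurableSet_of_dOpen {U : Set (Cn n)} (hUΩ : U ⊆ B.Ω)
    (hU : ∀ x ∈ U, ∃ δ : ℝ, 0 < δ ∧ ∀ w ∈ B.Ω, B.d x w < δ → w ∈ U) :
    MeasurableSet U := by
  obtain ⟨S, hSc, hSΩ, hSdense⟩ := B.d_separable
  have hunion : U = ⋃ y ∈ S, ⋃ q : ℚ, ⋃ (_ : {w | w ∈ B.Ω ∧ B.d y w < q} ⊆ U),
      {w | w ∈ B.Ω ∧ B.d y w < q} := by
    refine Set.Subset.antisymm (fun x hx => ?_) (by simp)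
    have hxΩ := hUΩ hx
    obtain ⟨δ, hδ, hball⟩ := hU x hx
    obtain ⟨y, hyS, hxy⟩ := hSdense x hxΩ (δ / 4) (by linarith)
    obtain ⟨q, hq₁, hq₂⟩ := exists_rat_btwn (show δ / 4 < δ / 2 by linarith)
    have hyΩ := hSΩ hyS
    simp only [Set.mem_iUnion]
    refine ⟨y, hyS, q, fun w ⟨hwΩ, hwd⟩ => hball w hwΩ ?_, hxΩ, ?_⟩
    · linarith [B.d_triangle x hxΩ y hyΩ w hwΩ]
    · rw [B.d_symm y hyΩ x hxΩ]
      linarith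
  rw [hunion]
  exact .biUnion hSc fun y hy => .iUnion fun q => .iUnion fun _ => B.measurableSet_dBall (hSΩ hy) q

theorem aemeasurable_nK : AEMeasurable B.nK (lamAux B.σ B.K) := by
  have hmeas : Measurable (B.Ω.indicator B.nK) := by
    refine measurable_of_Iio fun t => ?_
    have hpre : B.Ω.indicator B.nK ⁻¹' Set.Iio t =
        {w | w ∈ B.Ω ∧ B.nK w < t} ∪ (B.Ωᶜ ∩ {_w | (0 : ℝ) < t}) := by
      ext w
      by_cases hw : w ∈ B.Ω <;> simp [hw]
    rw [hpre]
    refine .union (B.measurableSet_of_dOpen (fun w hw => hw.1) ?_)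
      (B.isOpen_Ω.measurableSet.compl.inter (.const _))
    rintro x ⟨hx, hxt⟩
    obtain ⟨δ, hδ, hcont⟩ : ∃ δ : ℝ, 0 < δ ∧
        ∀ w ∈ B.Ω, B.d x w < δ → |B.nK w - B.nK x| < t - B.nK x := B.nK_continuous x hx (t - B.nK x) (sub_pos.mpr hxt)
    exact ⟨δ, hδ, fun w hw hdw => ⟨hw, by linarith [(abs_lt.mp (hcont w hw hdw)).2]⟩⟩
  exact hmeas.aemeasurable.congr <| B.ae_mem_Ω.mono fun w hw => Set.indicator_of_mem hw _

theorem norm_ipSc_K {z w : Cn n} (hz : z ∈ B.Ω) (hw : w ∈ B.Ω) :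
    ‖B.ipSc (B.K z) (B.K w)‖ = ‖B.K z w‖ := by
  rw [B.reproducing_sc (B.K z) (B.K_analytic z hz) (B.K_memLp z hz) w hw, ipSc,
    ← conj_ipAux, RCLike.norm_conj]
  rfl

theorem aemeasurable_norm_ipSc {z : Cn n} (hz : z ∈ B.Ω) :
    AEMeasurable (fun w => ‖B.ipSc (B.K z) (B.K w)‖) (lamAux B.σ B.K) :=
  (B.aemeasurable_of_continuousOn (B.K_analytic z hz).continuousOn).norm.congr <|
    B.ae_mem_Ω.mono fun _ hw => (B.norm_ipSc_K hz hw).symm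

theorem ae_φ_involutive {z : Cn n} (hz : z ∈ B.Ω) :
    ∀ᵐ w ∂(lamAux B.σ B.K), B.φ z (B.φ z w) = w :=
  B.ae_mem_Ω.mono fun w hw => B.φ_involutive z hz w hw

theorem exists_smul_lam_le_map_φ :
    ∃ c : ℝ≥0, c ≠ 0 ∧ ∀ z ∈ B.Ω, c • lamAux B.σ B.K ≤ (lamAux B.σ B.K).map (B.φ z) := by
  obtain ⟨c, _, hc, hquasi⟩ := B.lam_quasiInvariant
  refine ⟨c, hc.ne', fun z hz => smul_le_map_of_le_measure_image B.isOpen_Ω.measurableSet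
    (withDensity_absolutelyContinuous B.σ _ B.σ_carried)
    (B.aemeasurable_of_continuousOn (B.φ_analytic z hz).continuousOn) (B.φ_mapsTo z hz)
    (B.φ_involutive z hz) fun E hE hEΩ => (hquasi z hz E hE hEΩ).1⟩

theorem exists_kernel_ratio_mem_Icc : ∃ c C : ℝ, 0 < c ∧ ∀ z ∈ B.Ω, ∀ w ∈ B.Ω,
    ‖B.ipSc (B.K z) (B.K w)‖ / (B.nK z * B.nK w) * B.nK (B.φ z w) ∈ Set.Icc c C := by
  obtain ⟨c, C, hc, hA5⟩ := B.A5
  refine ⟨c, C, hc, fun z hz w hw => ?_⟩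
  have hp := B.nK_pos _ (B.φ_mapsTo z hz hw)
  obtain ⟨hlow, hup⟩ := hA5 z hz w hw
  simp only [nK, ipSc, Set.mem_Icc]
  constructor
  · simpa [div_mul_cancel₀ c hp.ne'] using mul_le_mul_of_nonneg_right hlow hp.le
  · simpa [div_mul_cancel₀ C hp.ne'] using mul_le_mul_of_nonneg_right hup hp.le

theorem exists_integrand_comparison (r s : ℝ) : ∃ a b : ℝ, 0 < a ∧ 0 ≤ b ∧
    ∀ z ∈ B.Ω, ∀ w ∈ B.Ω,
      ‖B.ipSc (B.K z) (B.K w)‖ ^ ((r - s) / 2) / B.nK w ^ r ≤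
          a * (‖B.ipSc (B.K z) (B.K (B.φ z w))‖ ^ ((r + s) / 2) /
            (B.nK z ^ s * B.nK (B.φ z w) ^ r)) ∧
        ‖B.ipSc (B.K z) (B.K (B.φ z w))‖ ^ ((r + s) / 2) / (B.nK z ^ s * B.nK (B.φ z w) ^ r) ≤
          b * (‖B.ipSc (B.K z) (B.K w)‖ ^ ((r - s) / 2) / B.nK w ^ r) := by
  obtain ⟨c, C, hc, hratio⟩ := B.exists_kernel_ratio_mem_Icc
  have hC : 0 < C := hc.trans_le (Set.nonempty_Icc.mp ⟨_, hratio 0 B.zero_mem 0 B.zero_mem⟩)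
  refine ⟨(c ^ ((r - s) / 2) + C ^ ((r - s) / 2)) * (c ^ (-((r + s) / 2)) + C ^ (-((r + s) / 2))),
    (c ^ ((r + s) / 2) + C ^ ((r + s) / 2)) * (c ^ (-((r - s) / 2)) + C ^ (-((r - s) / 2))),
    by positivity, by positivity, fun z hz w hw => ?_⟩
  have hφw := B.φ_mapsTo z hz hw
  have hρ' := hratio z hz _ hφw
  rw [B.φ_involutive z hz w hw] at hρ'
  have hidentity := Real.rudinForelli_rpow_identity (B.nK_pos z hz : 0 < B.nK z)
    (B.nK_pos w hw : 0 < B.nK w) (B.nK_pos _ hφw : 0 < B.nK (B.φ z w))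
    (norm_nonneg (B.ipSc (B.K z) (B.K w))) (norm_nonneg (B.ipSc (B.K z) (B.K (B.φ z w)))) r s
  have hF : 0 ≤ ‖B.ipSc (B.K z) (B.K w)‖ ^ ((r - s) / 2) / B.nK w ^ r := by
    unfold nK nKAux; positivity
  have hG : 0 ≤ ‖B.ipSc (B.K z) (B.K (B.φ z w))‖ ^ ((r + s) / 2) /
      (B.nK z ^ s * B.nK (B.φ z w) ^ r) := by
    unfold nK nKAux; positivity
  exact ⟨Real.le_mul_of_mul_rpow_eq hc (hratio z hz w hw) hρ' hG hidentity,
    Real.le_mul_of_mul_rpow_eq hc hρ' (hratio z hz w hw) hF hidentity.symm⟩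

end VBergman

/-- Rudin–Forelli quasi-identity: for all `r, s ∈ ℝ`,
`∫ |⟨K_z,K_w⟩|^{(r−s)/2}/‖K_w‖^r dλ(w) ≃ ∫ |⟨K_z,K_w⟩|^{(r+s)/2}/(‖K_z‖^s ‖K_w‖^r) dλ(w)`
with implied constants independent of `z ∈ Ω` (depending only on `r` and `s`). -/
theorem statement19 {n : ℕ} (B : VBergman n) :
    ∀ r s : ℝ, ∃ c C : ℝ, 0 < c ∧ ∀ z ∈ B.Ω,
      (c * ∫ w, ‖B.ipSc (B.K z) (B.K w)‖ ^ ((r - s) / 2) / B.nK w ^ r ∂(lamAux B.σ B.K) ≤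
        ∫ w, ‖B.ipSc (B.K z) (B.K w)‖ ^ ((r + s) / 2) /
          (B.nK z ^ s * B.nK w ^ r) ∂(lamAux B.σ B.K)) ∧
      (∫ w, ‖B.ipSc (B.K z) (B.K w)‖ ^ ((r + s) / 2) /
          (B.nK z ^ s * B.nK w ^ r) ∂(lamAux B.σ B.K) ≤
        C * ∫ w, ‖B.ipSc (B.K z) (B.K w)‖ ^ ((r - s) / 2) / B.nK w ^ r ∂(lamAux B.σ B.K)) := by
  intro r s
  obtain ⟨c, hc, hmap⟩ := B.exists_smul_lam_le_map_φ
  obtain ⟨a, b, ha, hb, hcompare⟩ := B.exists_integrand_comparison r s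
  have hc_pos : (0 : ℝ) < c := by exact_mod_cast pos_iff_ne_zero.mpr hc
  refine ⟨c / a, b / c, by positivity, fun z hz => ?_⟩
  have hipm := B.aemeasurable_norm_ipSc hz
  refine integral_comparable_of_le_comp hc (hmap z hz) (B.ae_φ_involutive hz) ?_ ?_ ?_ ?_ ha hb
    (B.ae_mem_Ω.mono fun w hw => (hcompare z hz w hw).1)
    (B.ae_mem_Ω.mono fun w hw => (hcompare z hz w hw).2)
  · exact fun w => by unfold VBergman.nK nKAux; positivity
  · exact fun w => by unfold VBergman.nK nKAux; positivity
  · exact ((hipm.pow_const _).div (B.aemeasurable_nK.pow_const _)).aestronglyMeasurable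
  · exact ((hipm.pow_const _).div
      ((B.aemeasurable_nK.pow_const _).const_mul _)).aestronglyMeasurable

end
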